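/- arXiv:math/0601684 — 4 statements merged into one kernel-verified Lean document; each statement's English description precedes it below -/
import Mathlib

section
/- For all n, the sum over k from 0 to n of C(2n, 2k) · catalan(k) · catalan(n−k) equals catalan(n) · catalan(n+1). -/
/-!
The summand for `k + l = n` equals `catalan n` times the Narayana number
`C(n+1, k) C(n+1, k+1) / (n+1)`, as one checks on factorials; by Vandermonde's identity the
Narayana numbers of row `n + 1` sum to `catalan (n + 1)`.
-/

open Nat Finset Finset.Nat

theorem catalan_mul_factorial_mul_factorial_succ (n : ℕ) :
    catalan n * (n ! * (n + 1)!) = (2 * n)! :=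
  calc catalan n * (n ! * (n + 1)!)
      _ = (n + 1) * catalan n * n ! * n ! := by rw [factorial_succ]; ring
      _ = (2 * n).choose n * n ! * (2 * n - n)! := by
        rw [succ_mul_catalan_eq_centralBinom, centralBinom_eq_two_mul_choose, two_mul,
          Nat.add_sub_cancel]
      _ = (2 * n)! := choose_mul_factorial_mul_factorial (by omega)

theorem cast_catalan_eq_factorial_div {K : Type*} [Field K] [CharZero K] (n : ℕ) :
    (catalan n : K) = (2 * n)! / (n ! * (n + 1)!) := by
  rw [eq_div_iff (mod_cast (mul_pos n.factorial_pos (n + 1).factorial_pos).ne')]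
  exact_mod_cast catalan_mul_factorial_mul_factorial_succ n

theorem sum_range_choose_mul_choose_succ (n : ℕ) :
    ∑ k ∈ range (n + 1), (n + 1).choose k * (n + 1).choose (k + 1) =
      (n + 1) * catalan (n + 1) := by
  have vandermonde : ∑ k ∈ range (n + 1), (n + 1).choose k * (n + 1).choose (k + 1) =
      (2 * n + 2).choose n := by
    rw [show 2 * n + 2 = (n + 1) + (n + 1) by ring, add_choose_eq,
      sum_antidiagonal_eq_sum_range_succ (fun i j => (n + 1).choose i * (n + 1).choose j)]
    refine sum_congr rfl fun k hk => ?_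
    have hk : k ≤ n := mem_range_succ_iff.mp hk
    rw [← choose_symm (by omega : k + 1 ≤ n + 1)]
    congr 2
    omega
  have shift : (2 * n + 2).choose (n + 1) * (n + 1) = (2 * n + 2).choose n * (n + 2) := by
    rw [choose_succ_right_eq]; congr 1; omega
  have catalan_succ : (n + 2) * catalan (n + 1) = (2 * n + 2).choose (n + 1) := by
    rw [succ_mul_catalan_eq_centralBinom, centralBinom_eq_two_mul_choose, Nat.mul_add_one]
  rw [vandermonde]
  apply Nat.eq_of_mul_eq_mul_right (show 0 < n + 2 by omega)
  rw [← shift, ← catalan_succ]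
  ring

theorem succ_mul_choose_mul_catalan_mul_catalan (k l : ℕ) :
    (k + l + 1) * ((2 * (k + l)).choose (2 * k) * catalan k * catalan l) =
      catalan (k + l) * ((k + l + 1).choose k * (k + l + 1).choose (k + 1)) := by
  apply Nat.cast_injective (R := ℚ)
  push_cast
  rw [cast_choose ℚ (by omega : 2 * k ≤ 2 * (k + l)), cast_choose ℚ (by omega : k ≤ k + l + 1),
    cast_choose ℚ (by omega : k + 1 ≤ k + l + 1), show 2 * (k + l) - 2 * k = 2 * l by omega,
    show k + l + 1 - k = l + 1 by omega, show k + l + 1 - (k + 1) = l by omega]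
  simp only [cast_catalan_eq_factorial_div, factorial_succ]
  push_cast
  field_simp

/-- Summing over the number of `a`'s, shuffles of parenthesis systems are counted by
`∑ k, C(2n, 2k)·catalan k·catalan (n-k)`, which equals `catalan n · catalan (n+1)`. -/
theorem sum_choose_catalan (n : ℕ) :
    ∑ k ∈ Finset.range (n + 1), (2 * n).choose (2 * k) * catalan k * catalan (n - k) =
      catalan n * catalan (n + 1) := by
  apply Nat.eq_of_mul_eq_mul_left (succ_pos n)
  rw [← sum_antidiagonal_eq_sum_range_succ_mk
    (fun kl => (2 * n).choose (2 * kl.1) * catalan kl.1 * catalan kl.2), mul_sum]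
  calc ∑ kl ∈ antidiagonal n, (n + 1) * ((2 * n).choose (2 * kl.1) * catalan kl.1 * catalan kl.2)
      = ∑ kl ∈ antidiagonal n, catalan n * ((n + 1).choose kl.1 * (n + 1).choose (kl.1 + 1)) :=
        sum_congr rfl fun kl hkl => by
          rw [← mem_antidiagonal.mp hkl, succ_mul_choose_mul_catalan_mul_catalan]
    _ = catalan n * ((n + 1) * catalan (n + 1)) := by
        rw [← mul_sum, sum_antidiagonal_eq_sum_range_succ_mk, sum_range_choose_mul_choose_succ]
    _ = (n + 1) * (catalan n * catalan (n + 1)) := by ring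
end

section
/- For all n, (2n)! / ((n+1)!)^2 · C(2n+2, n) = catalan(n) · catalan(n+1). -/
open Nat

/-- `(2n)!/((n+1)!)² · C(2n+2, n) = catalan n · catalan (n+1)`, stated multiplicatively. -/
theorem factorial_choose_catalan (n : ℕ) :
    (2 * n)! * (2 * n + 2).choose n = ((n + 1)!) ^ 2 * (catalan n * catalan (n + 1)) := by
  apply Nat.eq_of_mul_eq_mul_left (show 0 < (n + 1) * (n + 2) by positivity)
  have h1 : (n + 1) * catalan n = (2 * n).choose n := by
    simpa [Nat.centralBinom] using succ_mul_catalan_eq_centralBinom (n := n)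
  have h2 : (n + 2) * catalan (n + 1) = (2 * n + 2).choose (n + 1) := by
    have := succ_mul_catalan_eq_centralBinom (n := n + 1)
    simpa [Nat.centralBinom, Nat.mul_add] using this
  have key : (2 * n + 2).choose (n + 1) * (n + 1) = (2 * n + 2).choose n * (n + 2) := by
    have := Nat.choose_succ_right_eq (2 * n + 2) n
    have h : 2 * n + 2 - n = n + 2 := by omega
    rw [h] at this
    exact this
  have hfac : (2 * n).choose n * n ! * n ! = (2 * n)! := by
    have := Nat.choose_mul_factorial_mul_factorial (show n ≤ 2 * n by omega)
    have h : 2 * n - n = n := by omega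
    rwa [h] at this
  have hfs : (n + 1)! = (n + 1) * n ! := rfl
  calc (n + 1) * (n + 2) * ((2 * n)! * (2 * n + 2).choose n)
      = (2 * n)! * ((2 * n + 2).choose n * (n + 2)) * (n + 1) := by ring
    _ = (2 * n)! * ((2 * n + 2).choose (n + 1) * (n + 1)) * (n + 1) := by rw [key]
    _ = ((2 * n).choose n * n ! * n !) * ((2 * n + 2).choose (n + 1) * (n + 1)) * (n + 1) := by
        rw [hfac]
    _ = ((n + 1) * n !) ^ 2 * (((n + 1) * catalan n) * ((n + 2) * catalan (n + 1))) := by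
        rw [h1, h2]; ring
    _ = (n + 1) * (n + 2) * (((n + 1)!) ^ 2 * (catalan n * catalan (n + 1))) := by
        rw [hfs]; ring
end

section
/- The number of non-crossing partitions of a linearly ordered set of size n equals the n-th Catalan number catalan(n). -/
/-- An equivalence relation on `Fin n` is non-crossing if there are no
`a < b < c < d` with `a ∼ c`, `b ∼ d` and `a ≁ b`. -/
def IsNoncrossing {n : ℕ} (s : Setoid (Fin n)) : Prop :=
  ∀ a b c d : Fin n, a < b → b < c → c < d → s.r a c → s.r b d → s.r a b

namespace NCCount

def LiftRel {m : ℕ} (s : Setoid (Fin m)) (a b : ℕ) : Prop :=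
  ∃ (ha : a < m) (hb : b < m), s.r ⟨a, ha⟩ ⟨b, hb⟩

lemma LiftRel.refl {m : ℕ} (s : Setoid (Fin m)) {a : ℕ} (h : a < m) : LiftRel s a a :=
  ⟨h, h, s.refl _⟩

lemma LiftRel.symm {m : ℕ} {s : Setoid (Fin m)} {a b : ℕ} (h : LiftRel s a b) :
    LiftRel s b a := by
  obtain ⟨ha, hb, h⟩ := h
  exact ⟨hb, ha, s.symm h⟩

lemma LiftRel.trans {m : ℕ} {s : Setoid (Fin m)} {a b c : ℕ}
    (h1 : LiftRel s a b) (h2 : LiftRel s b c) : LiftRel s a c := by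
  obtain ⟨ha, hb, h1⟩ := h1
  obtain ⟨hb', hc, h2⟩ := h2
  exact ⟨ha, hc, s.trans h1 h2⟩

/-- index map sending `0 ↦ 0` and `a ↦ a - (i+1)` otherwise. -/
def gmap (i a : ℕ) : ℕ := if a = 0 then 0 else a - (i + 1)

/-- The combined relation on naturals: element `0` joins the block of `i+1`
(element `0` of `u`), elements `1..i` carry `t`, elements `i+1..n` carry `u`. -/
def BackRel {n i : ℕ} (t : Setoid (Fin i)) (u : Setoid (Fin (n - i))) (a b : ℕ) : Prop :=
  (a = 0 ∧ b = 0) ∨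
  (0 < a ∧ 0 < b ∧ LiftRel t (a - 1) (b - 1)) ∨
  ((a = 0 ∨ i < a) ∧ (b = 0 ∨ i < b) ∧ LiftRel u (gmap i a) (gmap i b))

lemma backRel_symm {n i : ℕ} {t : Setoid (Fin i)} {u : Setoid (Fin (n - i))} {a b : ℕ}
    (h : BackRel t u a b) : BackRel t u b a := by
  rcases h with ⟨h1, h2⟩ | ⟨h1, h2, h3⟩ | ⟨h1, h2, h3⟩
  · exact Or.inl ⟨h2, h1⟩
  · exact Or.inr (Or.inl ⟨h2, h1, h3.symm⟩)
  · exact Or.inr (Or.inr ⟨h2, h1, h3.symm⟩)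

lemma backRel_trans {n i : ℕ} {t : Setoid (Fin i)} {u : Setoid (Fin (n - i))} {a b c : ℕ}
    (h : BackRel t u a b) (h' : BackRel t u b c) : BackRel t u a c := by
  rcases h with ⟨h1, h2⟩ | ⟨h1, h2, h3⟩ | ⟨h1, h2, h3⟩
  · -- a = 0, b = 0
    subst h1; subst h2
    rcases h' with ⟨_, hc⟩ | ⟨hb, _, _⟩ | ⟨_, hc, h3'⟩
    · exact Or.inl ⟨rfl, hc⟩
    · omega
    · exact Or.inr (Or.inr ⟨Or.inl rfl, hc, h3'⟩)
  · -- t-clause (a,b); note b ≤ i and 0 < b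
    have hbi : b - 1 < i := h3.symm.1
    rcases h' with ⟨hb, _⟩ | ⟨_, hc, h3'⟩ | ⟨hb, _, _⟩
    · omega
    · exact Or.inr (Or.inl ⟨h1, hc, h3.trans h3'⟩)
    · omega
  · -- u-clause (a,b); b = 0 ∨ i < b
    rcases h' with ⟨hb, hc⟩ | ⟨hb, hc, h3'⟩ | ⟨_, hc, h3'⟩
    · subst hb; subst hc
      exact Or.inr (Or.inr ⟨h1, Or.inl rfl, h3⟩)
    · -- t-clause (b,c): 0 < b ∧ b ≤ i, contradiction with h2
      have : b - 1 < i := h3'.1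
      omega
    · exact Or.inr (Or.inr ⟨h1, hc, h3.trans h3'⟩)

def backSetoid (n i : ℕ) (hi : i ≤ n) (t : Setoid (Fin i)) (u : Setoid (Fin (n - i))) :
    Setoid (Fin (n + 1)) where
  r x y := BackRel t u x.val y.val
  iseqv := by
    refine ⟨fun x => ?_, backRel_symm, backRel_trans⟩
    rcases x with ⟨a, ha⟩
    show BackRel t u a a
    rcases Nat.eq_zero_or_pos a with h | h
    · exact Or.inl ⟨h, h⟩
    rcases le_or_gt a i with h' | h'
    · exact Or.inr (Or.inl ⟨h, h, LiftRel.refl t (by omega)⟩)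
    · refine Or.inr (Or.inr ⟨Or.inr h', Or.inr h', LiftRel.refl u ?_⟩)
      simp only [gmap]
      split_ifs <;> omega

lemma backSetoid_nc (n i : ℕ) (hi : i ≤ n) (t : Setoid (Fin i)) (u : Setoid (Fin (n - i)))
    (ht : IsNoncrossing t) (hu : IsNoncrossing u) :
    IsNoncrossing (backSetoid n i hi t u) := by
  rintro ⟨a, han⟩ ⟨b, hbn⟩ ⟨c, hcn⟩ ⟨d, hdn⟩ hab hbc hcd hac hbd
  simp only [Fin.mk_lt_mk] at hab hbc hcd
  change BackRel t u a c at hac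
  change BackRel t u b d at hbd
  show BackRel t u a b
  rcases hac with ⟨h1, h2⟩ | ⟨h1, h2, h3⟩ | ⟨h1, h2, h3⟩
  · omega
  · -- t-clause: a, c ∈ [1, i], hence b too
    have hci : c - 1 < i := h3.symm.1
    -- b-d relation must be the t-clause
    rcases hbd with ⟨hb, _⟩ | ⟨hb1, hb2, hb3⟩ | ⟨hb, _, _⟩
    · omega
    · -- apply noncrossing of t
      have hdi : d - 1 < i := hb3.symm.1
      obtain ⟨pa, pc, rac⟩ := h3
      obtain ⟨pb, pd, rbd⟩ := hb3
      have := ht ⟨a - 1, pa⟩ ⟨b - 1, pb⟩ ⟨c - 1, pc⟩ ⟨d - 1, pd⟩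
        (Fin.mk_lt_mk.mpr (by omega)) (Fin.mk_lt_mk.mpr (by omega))
        (Fin.mk_lt_mk.mpr (by omega)) rac rbd
      exact Or.inr (Or.inl ⟨h1, hb1, pa, pb, this⟩)
    · omega
  · -- u-clause for (a,c)
    have hic : i < c := by
      rcases h2 with h | h
      · omega
      · exact h
    rcases h1 with rfl | hia
    · -- a = 0; b-d must be the u-clause
      rcases hbd with ⟨hb, _⟩ | ⟨hb1, hb2, hb3⟩ | ⟨hb1, hb2, hb3⟩
      · omega
      · have hdi : d - 1 < i := hb3.symm.1
        omega
      · have hib : i < b := by rcases hb1 with h | h <;> omega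
        obtain ⟨p0, pc, rac⟩ := h3
        obtain ⟨pb, pd, rbd⟩ := hb3
        -- gmap i 0 = 0
        rcases Nat.eq_or_lt_of_le (Nat.succ_le_of_lt hib) with hbe | hbl
        · -- b = i + 1: gmap i b = 0 = gmap i 0, relate via refl
          refine Or.inr (Or.inr ⟨Or.inl rfl, Or.inr hib, p0, pb, ?_⟩)
          have hval : (⟨gmap i b, pb⟩ : Fin (n - i)) = ⟨gmap i 0, p0⟩ := by
            apply Fin.ext
            simp only [gmap]
            split_ifs <;> omega
          rw [hval]
        · -- 0 < gmap i b: use noncrossing of u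
          refine Or.inr (Or.inr ⟨Or.inl rfl, Or.inr hib, p0, pb, ?_⟩)
          have := hu ⟨gmap i 0, p0⟩ ⟨gmap i b, pb⟩ ⟨gmap i c, pc⟩ ⟨gmap i d, pd⟩
            (by simp only [Fin.mk_lt_mk, gmap]; split_ifs <;> omega)
            (by simp only [Fin.mk_lt_mk, gmap]; split_ifs <;> omega)
            (by simp only [Fin.mk_lt_mk, gmap]; split_ifs <;> omega) rac rbd
          exact this
    · -- i < a, so everything is > i
      rcases hbd with ⟨hb, _⟩ | ⟨hb1, hb2, hb3⟩ | ⟨hb1, hb2, hb3⟩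
      · omega
      · have hdi : d - 1 < i := hb3.symm.1
        omega
      · obtain ⟨pa, pc, rac⟩ := h3
        obtain ⟨pb, pd, rbd⟩ := hb3
        refine Or.inr (Or.inr ⟨Or.inr hia, Or.inr (by omega), pa, pb, ?_⟩)
        exact hu ⟨gmap i a, pa⟩ ⟨gmap i b, pb⟩ ⟨gmap i c, pc⟩ ⟨gmap i d, pd⟩
          (by simp only [Fin.mk_lt_mk, gmap]; split_ifs <;> omega)
          (by simp only [Fin.mk_lt_mk, gmap]; split_ifs <;> omega)
          (by simp only [Fin.mk_lt_mk, gmap]; split_ifs <;> omega) rac rbd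


section Forward

variable {n : ℕ} (s : Setoid (Fin (n + 1)))

/-- The smallest positive element related to `0`, or `n+1` if there is none. -/
noncomputable def jval : ℕ :=
  sInf {k | (0 < k ∧ k ≤ n ∧ LiftRel s 0 k) ∨ k = n + 1}

lemma jval_mem : (0 < jval s ∧ jval s ≤ n ∧ LiftRel s 0 (jval s)) ∨ jval s = n + 1 := by
  have h : jval s ∈ {k | (0 < k ∧ k ≤ n ∧ LiftRel s 0 k) ∨ k = n + 1} :=
    Nat.sInf_mem ⟨n + 1, Or.inr rfl⟩
  exact h

lemma jval_pos : 0 < jval s := by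
  rcases jval_mem s with ⟨h, _⟩ | h <;> omega

lemma jval_le : jval s ≤ n + 1 := by
  exact Nat.sInf_le (Or.inr rfl)

lemma jval_min {k : ℕ} (h0 : 0 < k) (hk : k < jval s) : ¬ LiftRel s 0 k := by
  intro hrel
  have hkn : k ≤ n := by have := jval_le s; omega
  exact Nat.notMem_of_lt_sInf hk (Or.inl ⟨h0, hkn, hrel⟩)

lemma jval_rel (h : jval s ≤ n) : LiftRel s 0 (jval s) := by
  rcases jval_mem s with ⟨_, _, h'⟩ | h' <;> [exact h'; omega]

/-- No relation between a middle element `1 ≤ a < jval` and an element `jval ≤ b ≤ n`. -/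
lemma jval_cross (hs : IsNoncrossing s) {a b : ℕ} (ha0 : 0 < a) (haj : a < jval s) (hjb : jval s ≤ b) (hbn : b ≤ n) :
    ¬ LiftRel s a b := by
  intro hrel
  have hj : LiftRel s 0 (jval s) := jval_rel s (le_trans hjb hbn)
  rcases eq_or_lt_of_le hjb with hbe | hbl
  · -- b = jval: then s 0 j and s a j give s 0 a
    rw [← hbe] at hrel
    exact jval_min s ha0 haj (hj.trans hrel.symm)
  · -- 0 < a < j < b crossing
    obtain ⟨p0, pj, rj⟩ := hj
    obtain ⟨pa, pb, rab⟩ := hrel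
    have := hs ⟨0, p0⟩ ⟨a, pa⟩ ⟨jval s, pj⟩ ⟨b, pb⟩
      (Fin.mk_lt_mk.mpr (by omega)) (Fin.mk_lt_mk.mpr (by omega))
      (Fin.mk_lt_mk.mpr (by omega)) rj rab
    exact jval_min s ha0 haj ⟨p0, pa, this⟩

/-- For `jval ≤ b ≤ n`, relation to `0` is the same as relation to `jval`. -/
lemma jval_zero_iff {b : ℕ} (hjb : jval s ≤ b) (hbn : b ≤ n) :
    LiftRel s 0 b ↔ LiftRel s (jval s) b := by
  have hj : LiftRel s 0 (jval s) := jval_rel s (le_trans hjb hbn)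
  constructor
  · exact fun h => hj.symm.trans h
  · exact fun h => hj.trans h

/-- Restriction of `s` to `{1, …, jval - 1}`. -/
def fwdT : Setoid (Fin (jval s - 1)) where
  r a b := LiftRel s (a + 1) (b + 1)
  iseqv := by
    refine ⟨fun a => ?_, fun h => h.symm, fun h h' => h.trans h'⟩
    have := jval_le s
    have := a.isLt
    exact LiftRel.refl s (by omega)

/-- Restriction of `s` to `{jval, …, n}`. -/
def fwdU : Setoid (Fin (n - (jval s - 1))) where
  r a b := LiftRel s (a + jval s) (b + jval s)
  iseqv := by
    refine ⟨fun a => ?_, fun h => h.symm, fun h h' => h.trans h'⟩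
    have := jval_le s
    have := jval_pos s
    have := a.isLt
    exact LiftRel.refl s (by omega)

lemma fwdT_nc (hs : IsNoncrossing s) : IsNoncrossing (fwdT s) := by
  rintro ⟨a, ha⟩ ⟨b, hb⟩ ⟨c, hc⟩ ⟨d, hd⟩ hab hbc hcd hac hbd
  simp only [Fin.mk_lt_mk] at hab hbc hcd
  obtain ⟨pa, pc, rac⟩ := hac
  obtain ⟨pb, pd, rbd⟩ := hbd
  exact ⟨pa, pb, hs ⟨a + 1, pa⟩ ⟨b + 1, pb⟩ ⟨c + 1, pc⟩ ⟨d + 1, pd⟩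
    (Fin.mk_lt_mk.mpr (by omega)) (Fin.mk_lt_mk.mpr (by omega))
    (Fin.mk_lt_mk.mpr (by omega)) rac rbd⟩

lemma fwdU_nc (hs : IsNoncrossing s) : IsNoncrossing (fwdU s) := by
  rintro ⟨a, ha⟩ ⟨b, hb⟩ ⟨c, hc⟩ ⟨d, hd⟩ hab hbc hcd hac hbd
  simp only [Fin.mk_lt_mk] at hab hbc hcd
  obtain ⟨pa, pc, rac⟩ := hac
  obtain ⟨pb, pd, rbd⟩ := hbd
  exact ⟨pa, pb, hs ⟨a + jval s, pa⟩ ⟨b + jval s, pb⟩ ⟨c + jval s, pc⟩ ⟨d + jval s, pd⟩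
    (Fin.mk_lt_mk.mpr (by omega)) (Fin.mk_lt_mk.mpr (by omega))
    (Fin.mk_lt_mk.mpr (by omega)) rac rbd⟩

end Forward


/-- Non-crossing partitions of `Fin m`. -/
abbrev NCP (m : ℕ) := {s : Setoid (Fin m) // IsNoncrossing s}

lemma gmap_zero (i : ℕ) : gmap i 0 = 0 := rfl

lemma gmap_of_gt {i a : ℕ} (h : i < a) : gmap i a = a - (i + 1) := by
  have : a ≠ 0 := by omega
  simp [gmap, this]

lemma setoid_eq_of_liftRel {m : ℕ} {s s' : Setoid (Fin m)}
    (h : ∀ a b : ℕ, LiftRel s a b ↔ LiftRel s' a b) : s = s' := by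
  apply Setoid.ext
  intro x y
  constructor
  · intro hr
    obtain ⟨_, _, hr'⟩ := (h x.val y.val).mp ⟨x.isLt, y.isLt, hr⟩
    exact hr'
  · intro hr
    obtain ⟨_, _, hr'⟩ := (h x.val y.val).mpr ⟨x.isLt, y.isLt, hr⟩
    exact hr'

lemma sigma_mk_eq {n : ℕ} {i i' : Fin (n + 1)} (h : (i : ℕ) = (i' : ℕ))
    {t : NCP i} {t' : NCP i'} {u : NCP (n - i)} {u' : NCP (n - i')}
    (ht : ∀ a b : ℕ, LiftRel t.1 a b ↔ LiftRel t'.1 a b)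
    (hu : ∀ a b : ℕ, LiftRel u.1 a b ↔ LiftRel u'.1 a b) :
    (⟨i, t, u⟩ : Σ i : Fin (n + 1), NCP i × NCP (n - i)) = ⟨i', t', u'⟩ := by
  have hii : i = i' := Fin.ext h
  subst hii
  have h1 : t = t' := Subtype.ext (setoid_eq_of_liftRel ht)
  have h2 : u = u' := Subtype.ext (setoid_eq_of_liftRel hu)
  rw [h1, h2]

section Back

variable {n i : ℕ} (hi : i ≤ n) (t : Setoid (Fin i)) (u : Setoid (Fin (n - i)))

lemma liftRel_back {a b : ℕ} :
    LiftRel (backSetoid n i hi t u) a b ↔ (a ≤ n ∧ b ≤ n ∧ BackRel t u a b) := by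
  constructor
  · rintro ⟨ha, hb, h⟩; exact ⟨by omega, by omega, h⟩
  · rintro ⟨ha, hb, h⟩; exact ⟨by omega, by omega, h⟩

lemma jval_back : jval (backSetoid n i hi t u) = i + 1 := by
  apply le_antisymm
  · apply Nat.sInf_le
    rcases eq_or_lt_of_le hi with he | hl
    · exact Or.inr (by omega)
    · refine Or.inl ⟨by omega, by omega, (liftRel_back hi t u).mpr ⟨by omega, by omega, ?_⟩⟩
      refine Or.inr (Or.inr ⟨Or.inl rfl, Or.inr (by omega), ?_⟩)
      have h0 : gmap i (i + 1) = gmap i 0 := by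
        rw [gmap_zero, gmap_of_gt (by omega)]; omega
      rw [h0, gmap_zero]
      exact LiftRel.refl u (by omega)
  · by_contra hcon
    push_neg at hcon
    have hj := jval_mem (backSetoid n i hi t u)
    set j := jval (backSetoid n i hi t u) with hjdef
    have hjpos := jval_pos (backSetoid n i hi t u)
    rcases hj with ⟨h0, hn, hrel⟩ | he
    · rw [liftRel_back hi t u] at hrel
      obtain ⟨-, -, hbr⟩ := hrel
      rcases hbr with ⟨h1, h2⟩ | ⟨h1, _, _⟩ | ⟨_, h2, _⟩
      · omega
      · omega
      · rcases h2 with h | h <;> omega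
    · omega

end Back

section FwdBack

variable {n : ℕ} (s : Setoid (Fin (n + 1)))

lemma back_fwd (hs : IsNoncrossing s) (x y : Fin (n + 1)) :
    BackRel (fwdT s) (fwdU s) x.val y.val ↔ s.r x y := by
  set j := jval s with hjdef
  have hjpos : 0 < j := jval_pos s
  have hjle : j ≤ n + 1 := jval_le s
  obtain ⟨a, han⟩ := x
  obtain ⟨b, hbn⟩ := y
  simp only
  constructor
  · rintro (⟨h1, h2⟩ | ⟨h1, h2, h3⟩ | ⟨h1, h2, h3⟩)
    · -- a = b = 0
      subst h1; subst h2
      exact s.refl _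
    · -- t-clause
      obtain ⟨pa, pb, hr⟩ := h3
      change LiftRel s (a - 1 + 1) (b - 1 + 1) at hr
      rw [(by omega : a - 1 + 1 = a), (by omega : b - 1 + 1 = b)] at hr
      obtain ⟨_, _, hr'⟩ := hr
      exact hr'
    · -- u-clause
      obtain ⟨pa, pb, hr⟩ := h3
      change LiftRel s (gmap (j - 1) a + j) (gmap (j - 1) b + j) at hr
      rcases h1 with rfl | h1 <;> rcases h2 with rfl | h2
      · exact s.refl _
      · -- a = 0, j - 1 < b
        rw [gmap_zero, gmap_of_gt h2, (by omega : b - (j - 1 + 1) + j = b)] at hr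
        simp only [Nat.zero_add] at hr
        have := (jval_zero_iff s (by omega) (by omega)).mpr hr
        obtain ⟨_, _, hr'⟩ := this
        exact hr'
      · -- j - 1 < a, b = 0
        rw [gmap_zero, gmap_of_gt h1, (by omega : a - (j - 1 + 1) + j = a)] at hr
        simp only [Nat.zero_add] at hr
        have := (jval_zero_iff s (by omega) (by omega)).mpr hr.symm
        obtain ⟨_, _, hr'⟩ := this
        exact s.symm hr'
      · rw [gmap_of_gt h1, gmap_of_gt h2,
          (by omega : a - (j - 1 + 1) + j = a), (by omega : b - (j - 1 + 1) + j = b)] at hr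
        obtain ⟨_, _, hr'⟩ := hr
        exact hr'
  · intro hr
    have hab : LiftRel s a b := ⟨han, hbn, hr⟩
    rcases Nat.eq_zero_or_pos a with ha0 | hapos <;> rcases Nat.eq_zero_or_pos b with hb0 | hbpos
    · exact Or.inl ⟨ha0, hb0⟩
    · -- a = 0, b > 0
      subst ha0
      rcases lt_or_ge b j with hbj | hjb
      · exact absurd hab (jval_min s hbpos hbj)
      · refine Or.inr (Or.inr ⟨Or.inl rfl, Or.inr (by omega), ?_⟩)
        rw [gmap_zero, gmap_of_gt (by omega : j - 1 < b)]
        refine ⟨by omega, by omega, ?_⟩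
        change LiftRel s (0 + j) (b - (j - 1 + 1) + j)
        rw [(by omega : b - (j - 1 + 1) + j = b), Nat.zero_add]
        exact (jval_zero_iff s hjb (by omega)).mp hab
    · -- a > 0, b = 0
      subst hb0
      rcases lt_or_ge a j with haj | hja
      · exact absurd hab.symm (jval_min s hapos haj)
      · refine Or.inr (Or.inr ⟨Or.inr (by omega), Or.inl rfl, ?_⟩)
        rw [gmap_zero, gmap_of_gt (by omega : j - 1 < a)]
        refine ⟨by omega, by omega, ?_⟩
        change LiftRel s (a - (j - 1 + 1) + j) (0 + j)
        rw [(by omega : a - (j - 1 + 1) + j = a), Nat.zero_add]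
        exact ((jval_zero_iff s hja (by omega)).mp hab.symm).symm
    · -- a > 0, b > 0
      rcases lt_or_ge a j with haj | hja <;> rcases lt_or_ge b j with hbj | hjb
      · -- both in middle: t-clause
        refine Or.inr (Or.inl ⟨hapos, hbpos, by omega, by omega, ?_⟩)
        change LiftRel s (a - 1 + 1) (b - 1 + 1)
        rw [(by omega : a - 1 + 1 = a), (by omega : b - 1 + 1 = b)]
        exact hab
      · exact absurd hab (jval_cross s hs hapos haj hjb (by omega))
      · exact absurd hab.symm (jval_cross s hs hbpos hbj hja (by omega))
      · refine Or.inr (Or.inr ⟨Or.inr (by omega), Or.inr (by omega), ?_⟩)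
        rw [gmap_of_gt (by omega : j - 1 < a), gmap_of_gt (by omega : j - 1 < b)]
        refine ⟨by omega, by omega, ?_⟩
        change LiftRel s (a - (j - 1 + 1) + j) (b - (j - 1 + 1) + j)
        rw [(by omega : a - (j - 1 + 1) + j = a), (by omega : b - (j - 1 + 1) + j = b)]
        exact hab

end FwdBack


section BackAgain

variable {n i : ℕ} (hi : i ≤ n) (t : Setoid (Fin i)) (u : Setoid (Fin (n - i)))

lemma liftRel_fwdT_back (a b : ℕ) :
    LiftRel (fwdT (backSetoid n i hi t u)) a b ↔ LiftRel t a b := by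
  have hj : jval (backSetoid n i hi t u) = i + 1 := jval_back hi t u
  constructor
  · rintro ⟨pa, pb, hr⟩
    rw [hj] at pa pb
    simp only [Nat.add_sub_cancel] at pa pb
    change LiftRel (backSetoid n i hi t u) (a + 1) (b + 1) at hr
    rw [liftRel_back hi t u] at hr
    obtain ⟨-, -, hbr⟩ := hr
    rcases hbr with ⟨h1, -⟩ | ⟨-, -, h3⟩ | ⟨h1, -, -⟩
    · omega
    · rw [(by omega : a + 1 - 1 = a), (by omega : b + 1 - 1 = b)] at h3
      exact h3
    · rcases h1 with h | h <;> omega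
  · rintro ⟨pa, pb, hr⟩
    refine ⟨by omega, by omega, ?_⟩
    change LiftRel (backSetoid n i hi t u) (a + 1) (b + 1)
    rw [liftRel_back hi t u]
    refine ⟨by omega, by omega, Or.inr (Or.inl ⟨by omega, by omega, ?_⟩)⟩
    rw [(by omega : a + 1 - 1 = a), (by omega : b + 1 - 1 = b)]
    exact ⟨pa, pb, hr⟩

lemma liftRel_fwdU_back (a b : ℕ) :
    LiftRel (fwdU (backSetoid n i hi t u)) a b ↔ LiftRel u a b := by
  have hj : jval (backSetoid n i hi t u) = i + 1 := jval_back hi t u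
  constructor
  · rintro ⟨pa, pb, hr⟩
    rw [hj] at pa pb
    simp only [Nat.add_sub_cancel] at pa pb
    change LiftRel (backSetoid n i hi t u)
      (a + jval (backSetoid n i hi t u)) (b + jval (backSetoid n i hi t u)) at hr
    rw [hj, liftRel_back hi t u] at hr
    obtain ⟨-, -, hbr⟩ := hr
    rcases hbr with ⟨h1, -⟩ | ⟨-, -, h3⟩ | ⟨-, -, h3⟩
    · omega
    · have := h3.1
      omega
    · rw [gmap_of_gt (by omega : i < a + (i + 1)), gmap_of_gt (by omega : i < b + (i + 1)),
        (by omega : a + (i + 1) - (i + 1) = a), (by omega : b + (i + 1) - (i + 1) = b)] at h3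
      exact h3
  · rintro ⟨pa, pb, hr⟩
    refine ⟨by omega, by omega, ?_⟩
    change LiftRel (backSetoid n i hi t u)
      (a + jval (backSetoid n i hi t u)) (b + jval (backSetoid n i hi t u))
    rw [hj, liftRel_back hi t u]
    refine ⟨by omega, by omega,
      Or.inr (Or.inr ⟨Or.inr (by omega), Or.inr (by omega), ?_⟩)⟩
    rw [gmap_of_gt (by omega : i < a + (i + 1)), gmap_of_gt (by omega : i < b + (i + 1)),
      (by omega : a + (i + 1) - (i + 1) = a), (by omega : b + (i + 1) - (i + 1) = b)]
    exact ⟨pa, pb, hr⟩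

end BackAgain

/-- The recursive decomposition of non-crossing partitions. -/
noncomputable def ncEquiv (n : ℕ) :
    NCP (n + 1) ≃ Σ i : Fin (n + 1), NCP i × NCP (n - i) where
  toFun S := ⟨⟨jval S.1 - 1, by have := jval_le S.1; omega⟩,
    ⟨fwdT S.1, fwdT_nc S.1 S.2⟩, ⟨fwdU S.1, fwdU_nc S.1 S.2⟩⟩
  invFun x := ⟨backSetoid n x.1 x.1.is_le x.2.1.1 x.2.2.1,
    backSetoid_nc n x.1 x.1.is_le x.2.1.1 x.2.2.1 x.2.1.2 x.2.2.2⟩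
  left_inv S := Subtype.ext (Setoid.ext fun x y => back_fwd S.1 S.2 x y)
  right_inv x := by
    obtain ⟨i, ⟨t, ht⟩, ⟨u, hu⟩⟩ := x
    exact sigma_mk_eq (by
        show jval (backSetoid n i.val i.is_le t u) - 1 = i.val
        rw [jval_back i.is_le t u]
        omega)
      (liftRel_fwdT_back i.is_le t u) (liftRel_fwdU_back i.is_le t u)

lemma catalan_pos (n : ℕ) : 0 < catalan n := by
  have h := succ_mul_catalan_eq_centralBinom n
  have h2 := Nat.centralBinom_pos n
  rcases Nat.eq_zero_or_pos (catalan n) with h0 | h0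
  · rw [h0, mul_zero] at h
    omega
  · exact h0

end NCCount

/-- The number of non-crossing partitions of a linearly ordered set of size `n`
is the `n`-th Catalan number. -/
theorem noncrossing_card (n : ℕ) :
    Nat.card {s : Setoid (Fin n) // IsNoncrossing s} = catalan n := by
  induction n using Nat.strong_induction_on with
  | _ n ih =>
    rcases n with _ | m
    · -- base case
      haveI : Subsingleton (Setoid (Fin 0)) := ⟨fun a b => Setoid.ext fun x => x.elim0⟩
      haveI : Subsingleton (NCCount.NCP 0) := ⟨fun a b => Subtype.ext (Subsingleton.elim _ _)⟩
      haveI : Nonempty (NCCount.NCP 0) :=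
        ⟨⟨⟨fun _ _ => True, ⟨fun _ => trivial, fun _ => trivial, fun _ _ => trivial⟩⟩,
          fun a => a.elim0⟩⟩
      rw [Nat.card_unique, catalan_zero]
    · -- inductive step
      rw [Nat.card_congr (NCCount.ncEquiv m)]
      have hfin : ∀ k : ℕ, k < m + 1 → Finite (NCCount.NCP k) := by
        intro k hk
        apply Nat.finite_of_card_ne_zero
        rw [ih k hk]
        exact (NCCount.catalan_pos k).ne'
      haveI : ∀ i : Fin (m + 1), Finite (NCCount.NCP i × NCCount.NCP (m - i)) := by
        intro i
        haveI := hfin i (by omega)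
        haveI := hfin (m - i) (by omega)
        infer_instance
      letI : ∀ i : Fin (m + 1), Fintype (NCCount.NCP i × NCCount.NCP (m - i)) :=
        fun i => Fintype.ofFinite _
      rw [Nat.card_eq_fintype_card, Fintype.card_sigma]
      have hcard : ∀ i : Fin (m + 1),
          Fintype.card (NCCount.NCP i × NCCount.NCP (m - i)) =
            catalan i * catalan (m - i) := by
        intro i
        rw [← Nat.card_eq_fintype_card, Nat.card_prod, ih i (by omega), ih (m - i) (by omega)]
      rw [Finset.sum_congr rfl fun i _ => hcard i]
      exact (catalan_succ m).symm
end

section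
/- Any directed cycle in an orientation of a planar map obtained from a spanning tree T by the rule 'tree edges point away from the root; non-tree edges are oriented so that their head precedes their tail in the contour order of T' must contain the root in its interior region; equivalently, the orientation has no positive (counterclockwise, root-exterior) directed cycle. -/
open Relation

/-- A rooted combinatorial planar map with `n` edges.  The darts (half-edges) are
`Fin (2*n+1)`; the root is a dangling half-edge, fixed by the edge-involution `α`.
`σ` is the counterclockwise rotation of darts around their vertex.  Vertices are the
cycles of `σ`, faces are the cycles of `σ * α`; planarity is Euler's formula
`V + F = E + 2` and connectivity says every dart is reachable from the root. -/
structure RMap (n : ℕ) where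
  σ : Equiv.Perm (Fin (2 * n + 1))
  α : Equiv.Perm (Fin (2 * n + 1))
  root : Fin (2 * n + 1)
  α_invol : ∀ d, α (α d) = d
  α_root : α root = root
  α_ne : ∀ d, d ≠ root → α d ≠ d
  connected : ∀ d, Relation.ReflTransGen (fun x y => y = σ x ∨ y = α x) root d
  planar : Nat.card (Quot σ.SameCycle) + Nat.card (Quot (σ * α).SameCycle) = n + 2

variable {n : ℕ}

/-- Moving along the submap with dart set `T`: rotate around a vertex, or cross an
edge of `T`. -/
def treeStep (M : RMap n) (T : Set (Fin (2 * n + 1))) (x y : Fin (2 * n + 1)) : Prop :=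
  y = M.σ x ∨ (x ∈ T ∧ y = M.α x)

/-- Number of vertices of `M` (cycles of `σ`). -/
noncomputable def numVertices (M : RMap n) : ℕ := Nat.card (Quot M.σ.SameCycle)

/-- `T` (a set of darts closed under `α`, not containing the root) is a spanning tree:
every dart is reachable from the root inside `T`, and `T` carries `V - 1` edges, i.e.
`2(V-1)` darts. -/
def IsSpanningTree (M : RMap n) (T : Set (Fin (2 * n + 1))) : Prop :=
  M.root ∉ T ∧ (∀ d ∈ T, M.α d ∈ T) ∧
  (∀ d, ReflTransGen (treeStep M T) M.root d) ∧
  Nat.card T + 2 = 2 * numVertices M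

open Classical in
/-- The motion function of the tour of the spanning tree `T`: from a dart `d` at the
current corner, cross `d` if it is a tree dart and rotate, otherwise just rotate.
Iterating from the root performs the counterclockwise contour traversal of `T`. -/
noncomputable def tour (M : RMap n) (T : Set (Fin (2 * n + 1))) (d : Fin (2 * n + 1)) :
    Fin (2 * n + 1) :=
  if d ∈ T then M.σ (M.α d) else M.σ d

/-- Position of a dart in the contour order of the tour of `T` (first time of visit). -/
noncomputable def idx (M : RMap n) (T : Set (Fin (2 * n + 1))) (d : Fin (2 * n + 1)) : ℕ :=
  sInf {k | (tour M T)^[k] M.root = d}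

/-- The orientation `δ(M,T)`, given as its set of head darts: a tree edge is oriented
away from the root (its tail is met before its head in the contour order), a non-tree
edge is oriented so that its head is met before its tail. -/
noncomputable def deltaH (M : RMap n) (T : Set (Fin (2 * n + 1))) : Set (Fin (2 * n + 1)) :=
  {d | d ≠ M.root ∧ ((d ∈ T ∧ idx M T (M.α d) < idx M T d) ∨
                     (d ∉ T ∧ idx M T d < idx M T (M.α d)))}

/-- `H` is an orientation: it selects exactly one dart (the head) of each edge. -/
def IsOrientation (M : RMap n) (H : Set (Fin (2 * n + 1))) : Prop :=
  M.root ∉ H ∧ ∀ d, d ≠ M.root → (d ∈ H ↔ M.α d ∉ H)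

/-- One step of a directed walk: rotate around the current vertex, or traverse an edge
from its tail to its head. -/
def dirStep (M : RMap n) (H : Set (Fin (2 * n + 1))) (x y : Fin (2 * n + 1)) : Prop :=
  y = M.σ x ∨ (M.α x ∈ H ∧ y = M.α x)

/-- A directed simple cycle: tails `t i` of consecutively incident directed edges
(`i` runs cyclically), visiting pairwise distinct vertices. -/
structure DirCycle (M : RMap n) (H : Set (Fin (2 * n + 1))) where
  k : ℕ
  hk : 0 < k
  t : ZMod k → Fin (2 * n + 1)
  tails : ∀ i, M.α (t i) ∈ H
  chain : ∀ i, M.σ.SameCycle (M.α (t i)) (t (i + 1))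
  simple : ∀ i j, M.σ.SameCycle (t i) (t j) → i = j

/-- The darts lying on the cycle. -/
def cycleDarts {M : RMap n} {H : Set (Fin (2 * n + 1))} (C : DirCycle M H) :
    Set (Fin (2 * n + 1)) :=
  {d | ∃ i, d = C.t i ∨ d = M.α (C.t i)}

/-- Darts locally on the left of the cycle: at the vertex of `t i`, the darts met
counterclockwise strictly after the outgoing tail `t i` and strictly before the
incoming head `α (t (i-1))`. -/
def leftDarts {M : RMap n} {H : Set (Fin (2 * n + 1))} (C : DirCycle M H) :
    Set (Fin (2 * n + 1)) :=
  {d | ∃ i, ∃ m, 1 ≤ m ∧ d = (⇑M.σ)^[m] (C.t i) ∧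
      ∀ m', 1 ≤ m' → m' ≤ m → (⇑M.σ)^[m'] (C.t i) ≠ M.α (C.t (i - 1))}

/-- The interior (left) region of the cycle: all darts reachable from a locally-left
dart without touching the cycle. -/
def cycInterior {M : RMap n} {H : Set (Fin (2 * n + 1))} (C : DirCycle M H) :
    Set (Fin (2 * n + 1)) :=
  {d | ∃ x ∈ leftDarts C, x ∉ cycleDarts C ∧
    ReflTransGen (fun a b => (b = M.σ a ∨ b = M.α a) ∧
      a ∉ cycleDarts C ∧ b ∉ cycleDarts C) x d}

/-- A positive cycle is a directed cycle with the root in its exterior region. -/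
def IsPositive {M : RMap n} {H : Set (Fin (2 * n + 1))} (C : DirCycle M H) : Prop :=
  M.root ∉ cycInterior C

/-- A tree-orientation: an orientation with no positive cycle in which every dart
(hence every vertex) can be reached from the root by a directed path. -/
def IsTreeOrientation (M : RMap n) (H : Set (Fin (2 * n + 1))) : Prop :=
  IsOrientation M H ∧ (∀ d, ReflTransGen (dirStep M H) M.root d) ∧
  ∀ C : DirCycle M H, ¬ IsPositive C

/-!
The tour is the permutation `σ * α_T`, where `α_T` is `α` on tree darts and the identity
elsewhere. Since `T` is connected and has `V - 1` edges, its edges can be composed into `σ` one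
at a time so that each joins two different cycles; the `V` cycles of `σ` thus merge into one,
so the tour visits every dart once in `2n + 1` steps and `idx` inverts it.

Every dart is then reached along the tour: a tree edge met from its first end is directed
forwards and can be crossed, while one met from its second end leads back to a dart reached
earlier. Given a directed cycle, let `e` be its dart visited last by the tour. The orientation
rule forces the tour to leave `e` into the corner just after a tail of the cycle, on its left
side; the remainder of the tour reaches the root without meeting the cycle again, so the root
lies in the interior.
-/

open Function Finset Equiv Equiv.Perm

theorem Function.sInf_iterate_eq_of_lt_minimalPeriod {X : Type*} {f : X → X} {x : X} {k : ℕ}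
    (hk : k < minimalPeriod f x) : sInf {j | f^[j] x = f^[k] x} = k :=
  le_antisymm (Nat.sInf_le rfl) <| le_of_lt_minimalPeriod_of_iterate_eq hk
    (Nat.sInf_mem (s := {j | f^[j] x = f^[k] x}) ⟨k, rfl⟩).symm

theorem Relation.ReflTransGen.iterate {X : Type*} {r : X → X → Prop} {f : X → X} {x : X}
    {a b : ℕ} (hab : a ≤ b)
    (h : ∀ j, a ≤ j → j < b → ReflTransGen r (f^[j] x) (f^[j + 1] x)) :
    ReflTransGen r (f^[a] x) (f^[b] x) := by
  induction b, hab using Nat.le_induction with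
  | base => rfl
  | succ b hab ih => exact (ih fun j hj hjb => h j hj (by omega)).trans (h b hab (by omega))

namespace Equiv.Perm

variable {X : Type*} {x : Perm X} {u v a b : X}

theorem SameCycle.of_forall_sameCycle_apply [Finite X] {y : Perm X}
    (hy : ∀ c, y.SameCycle c (x c)) (h : x.SameCycle a b) : y.SameCycle a b := by
  obtain ⟨k, -, rfl⟩ := h.exists_pow_eq'
  clear h
  induction k with
  | zero => rfl
  | succ k ih => rw [pow_succ', mul_apply]; exact ih.trans (hy _)

theorem exists_lt_minimalPeriod_iterate_eq [Finite X] (h : x.SameCycle a b) :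
    ∃ k < minimalPeriod x a, (⇑x)^[k] a = b := by
  obtain ⟨k, -, hk⟩ := h.exists_pow_eq'
  refine ⟨k % minimalPeriod x a,
    Nat.mod_lt _ (minimalPeriod_pos_of_mem_periodicPts (x.injective.mem_periodicPts a)), ?_⟩
  rw [iterate_mod_minimalPeriod_eq, ← coe_pow, hk]

theorem minimalPeriod_eq_card_of_forall_sameCycle [Fintype X] (h : ∀ b, x.SameCycle a b) :
    minimalPeriod x a = Fintype.card X := by
  have hsurj : Surjective fun k : Fin (minimalPeriod x a) => (⇑x)^[k] a := fun b => by
    obtain ⟨k, hk, rfl⟩ := exists_lt_minimalPeriod_iterate_eq (h b)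
    exact ⟨⟨k, hk⟩, rfl⟩
  exact le_antisymm minimalPeriod_le_card (by simpa using Fintype.card_le_of_surjective _ hsurj)

section MulSwap

variable [DecidableEq X]

theorem sameCycle_mul_swap [Finite X] (huv : ¬ x.SameCycle u v) :
    (x * swap u v).SameCycle u v := by
  have hp := minimalPeriod_pos_of_mem_periodicPts (x.injective.mem_periodicPts v)
  -- `x * swap u v` runs through the `x`-cycle of `v`, entered from `u` instead of from `v`.
  have hiter : ∀ j, 1 ≤ j → j ≤ minimalPeriod x v →
      (⇑(x * swap u v))^[j] u = (⇑x)^[j] v := by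
    intro j hj
    induction j, hj using Nat.le_induction with
    | base => simp
    | succ j hj ih =>
      intro hjp
      have hju : (⇑x)^[j] v ≠ u := fun h =>
        huv (SameCycle.symm ⟨j, by rw [zpow_natCast, coe_pow, h]⟩)
      have hjv : (⇑x)^[j] v ≠ v :=
        not_isPeriodicPt_of_pos_of_lt_minimalPeriod (by omega) (by omega)
      rw [iterate_succ_apply', iterate_succ_apply', ih (by omega), mul_apply,
        swap_apply_of_ne_of_ne hju hjv]
  exact ⟨minimalPeriod x v, by
    rw [zpow_natCast, coe_pow, hiter _ hp le_rfl, iterate_minimalPeriod]⟩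

theorem SameCycle.mul_swap [Finite X] (huv : ¬ x.SameCycle u v) (h : x.SameCycle a b) :
    (x * swap u v).SameCycle a b := by
  refine h.of_forall_sameCycle_apply fun c => ?_
  have hc : x c = (x * swap u v) (swap u v c) := by simp
  rw [hc, sameCycle_apply_right]
  rcases eq_or_ne c u with rfl | hcu
  · simpa using sameCycle_mul_swap huv
  rcases eq_or_ne c v with rfl | hcv
  · simpa using (sameCycle_mul_swap huv).symm
  · rw [swap_apply_of_ne_of_ne hcu hcv]

theorem SameCycle.of_mul_swap [Finite X] (hu : ¬ x.SameCycle a u) (hv : ¬ x.SameCycle a v)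
    (h : (x * swap u v).SameCycle a b) : x.SameCycle a b := by
  obtain ⟨k, -, rfl⟩ := h.exists_pow_eq'
  clear h
  suffices ((x * swap u v) ^ k) a = (x ^ k) a by rw [this]; exact ⟨k, by simp⟩
  induction k with
  | zero => rfl
  | succ k ih =>
    have hka : x.SameCycle a ((x ^ k) a) := ⟨k, by simp⟩
    rw [pow_succ', mul_apply, ih, pow_succ', mul_apply, mul_apply,
      swap_apply_of_ne_of_ne (fun h => hu (by rwa [h] at hka)) (fun h => hv (by rwa [h] at hka))]

theorem card_quot_sameCycle_mul_swap [Finite X] (huv : ¬ x.SameCycle u v) :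
    Nat.card (Quot (x * swap u v).SameCycle) + 1 = Nat.card (Quot x.SameCycle) := by
  classical
  have hx := (SameCycle.equivalence x).quot_mk_eq_iff
  have hy := (SameCycle.equivalence (x * swap u v)).quot_mk_eq_iff
  -- The classes of `u` and `v` merge; every other class survives unchanged.
  let f : {s : Quot x.SameCycle // s ≠ Quot.mk _ v} → Quot (x * swap u v).SameCycle :=
    fun s => Quot.lift (Quot.mk _) (fun _ _ h => Quot.sound (h.mul_swap huv)) s.1
  have hf : Bijective f := by
    constructor
    · rintro ⟨⟨a⟩, ha⟩ ⟨⟨b⟩, hb⟩ hab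
      rw [ne_eq, hx] at ha hb
      replace hab : (x * swap u v).SameCycle a b := (hy a b).mp hab
      refine Subtype.ext ((hx a b).mpr ?_)
      by_cases hau : x.SameCycle a u
      · by_cases hbu : x.SameCycle b u
        · exact hau.trans hbu.symm
        · exact (hab.symm.of_mul_swap hbu hb).symm
      · exact hab.of_mul_swap hau ha
    · rintro ⟨b⟩
      by_cases hb : x.SameCycle b v
      · exact ⟨⟨Quot.mk _ u, by rwa [ne_eq, hx]⟩,
          Quot.sound ((sameCycle_mul_swap huv).trans (hb.symm.mul_swap huv))⟩
      · exact ⟨⟨Quot.mk _ b, by rwa [ne_eq, hx]⟩, rfl⟩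
  rw [← Nat.card_congr (Equiv.ofBijective f hf),
    ← Nat.card_congr (Equiv.optionSubtypeNe (Quot.mk x.SameCycle v)), Finite.card_option]

section Involutive

variable {ι : Perm X} (hι : Involutive ι) (u : X)
include hι

theorem swap_mul_apply_of_involutive {a : X} (hau : a ≠ u) (hav : a ≠ ι u) :
    (swap u (ι u) * ι) a = ι a :=
  swap_apply_of_ne_of_ne (fun h => hav (by rw [← hι a, h])) (fun h => hau (ι.injective h))

theorem involutive_swap_mul : Involutive (swap u (ι u) * ι) := fun a => by
  by_cases ha : a = u ∨ a = ι u
  · rcases ha with rfl | rfl <;> simp [hι _]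
  · push Not at ha
    have hιa : ι a ≠ u ∧ ι a ≠ ι u := ⟨fun h => ha.2 (by rw [← h, hι]),
      fun h => ha.1 (by rw [← hι a, h, hι])⟩
    rw [swap_mul_apply_of_involutive hι u ha.1 ha.2,
      swap_mul_apply_of_involutive hι u hιa.1 hιa.2, hι]

theorem card_support_swap_mul_add_two [Fintype X] (hu : ι u ≠ u) :
    #(swap u (ι u) * ι).support + 2 = #ι.support := by
  have hdisj : Disjoint (swap u (ι u)) (swap u (ι u) * ι) := fun a => by
    by_cases ha : a = u ∨ a = ι u
    · rcases ha with rfl | rfl <;> simp [hι _]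
    · push Not at ha
      exact Or.inl (swap_apply_of_ne_of_ne ha.1 ha.2)
  conv_rhs => rw [← swap_mul_self_mul u (ι u) ι]
  rw [hdisj.card_support_mul, card_support_swap hu.symm, add_comm]

end Involutive

theorem sameCycle_mul_of_involutive [Fintype X] {ι : Perm X} (hι : Involutive ι) {r : X}
    (hconn : ∀ d, ReflTransGen (fun a b => x.SameCycle a b ∨ b = ι a) r d)
    (hcard : #ι.support + 2 = 2 * Nat.card (Quot x.SameCycle)) (d : X) :
    (x * ι).SameCycle r d := by
  induction hk : #ι.support using Nat.strong_induction_on generalizing x ι with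
  | _ k ih =>
  by_cases hsplit : ∃ u, ¬ x.SameCycle u (ι u)
  · -- Removing the edge `{u, ι u}` from `ι` and adding it to `x` merges two cycles of `x`.
    obtain ⟨u, hu⟩ := hsplit
    have hne : ι u ≠ u := fun h => hu (by rw [h])
    have hconn' : ∀ d, ReflTransGen
        (fun a b => (x * swap u (ι u)).SameCycle a b ∨ b = (swap u (ι u) * ι) a) r d := by
      refine fun d => ReflTransGen.mono (fun a b hab => ?_) _ _ (hconn d)
      rcases hab with hab | rfl
      · exact Or.inl (hab.mul_swap hu)
      by_cases hau : a = u
      · subst hau; exact Or.inl (sameCycle_mul_swap hu)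
      by_cases hav : a = ι u
      · exact Or.inl (by rw [hav, hι]; exact (sameCycle_mul_swap hu).symm)
      exact Or.inr (swap_mul_apply_of_involutive hι u hau hav).symm
    have hsupp := card_support_swap_mul_add_two hι u hne
    have hcard' := card_quot_sameCycle_mul_swap hu
    rw [← swap_mul_self_mul u (ι u) ι, ← mul_assoc]
    exact ih _ (by omega) (involutive_swap_mul hι u) hconn' (by omega) rfl
  · -- Every edge of `ι` lies inside a cycle of `x`, so `x` is a single cycle and `ι = 1`.
    push Not at hsplit
    have hall : ∀ d, x.SameCycle r d := fun d => by
      induction hconn d with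
      | refl => rfl
      | tail _ hab ih =>
        rcases hab with hab | rfl
        · exact ih.trans hab
        · exact ih.trans (hsplit _)
    have hsub : Subsingleton (Quot x.SameCycle) :=
      ⟨by rintro ⟨a⟩ ⟨b⟩; exact Quot.sound ((hall a).symm.trans (hall b))⟩
    have hone : Nat.card (Quot x.SameCycle) = 1 :=
      Nat.card_eq_one_iff_unique.mpr ⟨hsub, ⟨Quot.mk _ r⟩⟩
    have hι1 : ι = 1 := by rw [← support_eq_empty_iff, ← Finset.card_eq_zero]; omega
    simpa [hι1] using hall d

end MulSwap

end Equiv.Perm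

open Classical in
noncomputable def treeInvolution (M : RMap n) {T : Set (Fin (2 * n + 1))}
    (hT : ∀ d ∈ T, M.α d ∈ T) : Perm (Fin (2 * n + 1)) :=
  Involutive.toPerm (fun d => if d ∈ T then M.α d else d) fun d => by
    by_cases hd : d ∈ T
    · simp [hd, hT d hd, M.α_invol]
    · simp [hd]

open Classical in
theorem treeInvolution_apply (M : RMap n) {T : Set (Fin (2 * n + 1))}
    (hT : ∀ d ∈ T, M.α d ∈ T) (d : Fin (2 * n + 1)) :
    treeInvolution M hT d = if d ∈ T then M.α d else d :=
  rfl

section Tour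

variable {M : RMap n} {T : Set (Fin (2 * n + 1))}

theorem tour_eq_mul_treeInvolution (hT : ∀ d ∈ T, M.α d ∈ T) :
    tour M T = ⇑(M.σ * treeInvolution M hT) := by
  funext d
  by_cases hd : d ∈ T <;> simp [tour, treeInvolution_apply, hd]

theorem coe_support_treeInvolution (hroot : M.root ∉ T) (hT : ∀ d ∈ T, M.α d ∈ T) :
    ((treeInvolution M hT).support : Set (Fin (2 * n + 1))) = T := by
  ext d
  by_cases hd : d ∈ T
  · simpa [treeInvolution_apply, hd] using M.α_ne d (ne_of_mem_of_not_mem hd hroot)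
  · simp [treeInvolution_apply, hd]

theorem sameCycle_root_mul_treeInvolution (hT : IsSpanningTree M T) (d : Fin (2 * n + 1)) :
    (M.σ * treeInvolution M hT.2.1).SameCycle M.root d := by
  obtain ⟨hroot, hclo, hconn, hcard⟩ := hT
  have hsupp : #(treeInvolution M hclo).support = Nat.card T := by
    rw [Nat.card_coe_set_eq, ← Set.ncard_coe_finset, coe_support_treeInvolution hroot hclo]
  refine sameCycle_mul_of_involutive (ι := treeInvolution M hclo) (Involutive.toPerm_involutive _)
    (fun d => ?_) (by rw [hsupp]; exact hcard) d
  refine ReflTransGen.mono (fun a b hab => ?_) _ _ (hconn d)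
  rcases hab with rfl | ⟨ha, rfl⟩
  · exact Or.inl (SameCycle.refl _ _).apply_right
  · exact Or.inr (by simp [treeInvolution_apply, ha])

theorem minimalPeriod_tour (hT : IsSpanningTree M T) :
    minimalPeriod (tour M T) M.root = 2 * n + 1 := by
  have := minimalPeriod_eq_card_of_forall_sameCycle (sameCycle_root_mul_treeInvolution hT)
  rwa [Fintype.card_fin, ← tour_eq_mul_treeInvolution] at this

variable (hT : IsSpanningTree M T)
include hT

theorem iterate_tour_period : (tour M T)^[2 * n + 1] M.root = M.root := by
  simpa [minimalPeriod_tour hT] using iterate_minimalPeriod (f := tour M T) (x := M.root)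

theorem idx_iterate_tour {k : ℕ} (hk : k < 2 * n + 1) : idx M T ((tour M T)^[k] M.root) = k :=
  sInf_iterate_eq_of_lt_minimalPeriod (by rwa [minimalPeriod_tour hT])

theorem exists_iterate_tour_eq (d : Fin (2 * n + 1)) :
    ∃ k < 2 * n + 1, (tour M T)^[k] M.root = d := by
  have := exists_lt_minimalPeriod_iterate_eq (sameCycle_root_mul_treeInvolution hT d)
  rwa [← tour_eq_mul_treeInvolution, minimalPeriod_tour hT] at this

theorem idx_lt (d : Fin (2 * n + 1)) : idx M T d < 2 * n + 1 := by
  obtain ⟨k, hk, rfl⟩ := exists_iterate_tour_eq hT d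
  rwa [idx_iterate_tour hT hk]

theorem iterate_tour_idx (d : Fin (2 * n + 1)) : (tour M T)^[idx M T d] M.root = d := by
  obtain ⟨k, hk, rfl⟩ := exists_iterate_tour_eq hT d
  rw [idx_iterate_tour hT hk]

end Tour

theorem RMap.α_eq_root_iff (M : RMap n) {d : Fin (2 * n + 1)} : M.α d = M.root ↔ d = M.root :=
  ⟨fun h => by rw [← M.α_invol d, h, M.α_root], fun h => h ▸ M.α_root⟩

section Orientation

variable {M : RMap n} {T : Set (Fin (2 * n + 1))} (hT : IsSpanningTree M T)
include hT

theorem idx_injective : Injective (idx M T) :=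
  LeftInverse.injective (g := fun k => (tour M T)^[k] M.root) (iterate_tour_idx hT)

theorem idx_α_ne {d : Fin (2 * n + 1)} (hd : d ≠ M.root) : idx M T (M.α d) ≠ idx M T d :=
  fun h => M.α_ne d hd (idx_injective hT h)

theorem deltaH_isOrientation : IsOrientation M (deltaH M T) := by
  refine ⟨fun h => h.1 rfl, fun d hd => ?_⟩
  have hαd : M.α d ≠ M.root := M.α_eq_root_iff.not.mpr hd
  have hidx := idx_α_ne hT hd
  have hTα : M.α d ∈ T ↔ d ∈ T := ⟨fun h => M.α_invol d ▸ hT.2.1 _ h, hT.2.1 d⟩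
  simp only [deltaH, Set.mem_ofPred_eq, M.α_invol, hTα, ne_eq, hd, hαd, not_false_eq_true,
    true_and]
  by_cases hdT : d ∈ T <;> simp [hdT] <;> omega

theorem reflTransGen_dirStep_deltaH (d : Fin (2 * n + 1)) :
    ReflTransGen (dirStep M (deltaH M T)) M.root d := by
  rw [← iterate_tour_idx hT d]
  suffices ∀ k < 2 * n + 1, ReflTransGen (dirStep M (deltaH M T)) M.root ((tour M T)^[k] M.root)
    from this _ (idx_lt hT d)
  intro k
  induction k using Nat.strong_induction_on with
  | _ k ih =>
  intro hk
  rcases k with _ | k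
  · rfl
  set p := (tour M T)^[k] M.root
  have hp : idx M T p = k := idx_iterate_tour hT (by omega)
  have hreach_p := ih k (by omega) (by omega)
  rw [iterate_succ_apply']
  by_cases hpT : p ∈ T
  · rw [tour, if_pos hpT]
    have hp_ne : p ≠ M.root := ne_of_mem_of_not_mem hpT hT.1
    rcases (idx_α_ne hT hp_ne).lt_or_gt with hlt | hgt
    · have hreach_αp := ih (idx M T (M.α p)) (by omega) (idx_lt hT _)
      rw [iterate_tour_idx hT] at hreach_αp
      exact hreach_αp.tail (Or.inl rfl)
    · have hhead : M.α p ∈ deltaH M T :=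
        ⟨M.α_eq_root_iff.not.mpr hp_ne, Or.inl ⟨hT.2.1 p hpT, by rwa [M.α_invol]⟩⟩
      exact (hreach_p.tail (Or.inr ⟨hhead, rfl⟩)).tail (Or.inl rfl)
  · rw [tour, if_neg hpT]
    exact hreach_p.tail (Or.inl rfl)

end Orientation

def outsideStep (M : RMap n) (A : Set (Fin (2 * n + 1))) (a b : Fin (2 * n + 1)) : Prop :=
  (b = M.σ a ∨ b = M.α a) ∧ a ∉ A ∧ b ∉ A

theorem reflTransGen_outsideStep_tour {M : RMap n} {T A : Set (Fin (2 * n + 1))}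
    (hA : ∀ d ∈ A, M.α d ∈ A) {p : Fin (2 * n + 1)} (hp : p ∉ A) (hq : tour M T p ∉ A) :
    ReflTransGen (outsideStep M A) p (tour M T p) := by
  unfold tour at hq ⊢
  split_ifs at hq ⊢
  · have hαp : M.α p ∉ A := fun h => hp (M.α_invol p ▸ hA _ h)
    exact (ReflTransGen.single ⟨Or.inr rfl, hp, hαp⟩).tail ⟨Or.inl rfl, hαp, hq⟩
  · exact ReflTransGen.single ⟨Or.inl rfl, hp, hq⟩

theorem reflTransGen_outsideStep_iterate_tour {M : RMap n} {T A : Set (Fin (2 * n + 1))}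
    (hA : ∀ d ∈ A, M.α d ∈ A) {x : Fin (2 * n + 1)} {a b : ℕ} (hab : a ≤ b)
    (hout : ∀ j, a ≤ j → j ≤ b → (tour M T)^[j] x ∉ A) :
    ReflTransGen (outsideStep M A) ((tour M T)^[a] x) ((tour M T)^[b] x) :=
  ReflTransGen.iterate hab fun j hj hjb => by
    rw [iterate_succ_apply']
    exact reflTransGen_outsideStep_tour hA (hout j hj hjb.le)
      (by rw [← iterate_succ_apply' (tour M T)]; exact hout (j + 1) (by omega) hjb)

section Cycle

variable {M : RMap n} {H : Set (Fin (2 * n + 1))} (C : DirCycle M H)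

theorem α_mem_cycleDarts {d : Fin (2 * n + 1)} (hd : d ∈ cycleDarts C) :
    M.α d ∈ cycleDarts C := by
  obtain ⟨i, rfl | rfl⟩ := hd
  · exact ⟨i, Or.inr rfl⟩
  · exact ⟨i, Or.inl (M.α_invol _)⟩

theorem root_notMem_cycleDarts (hH : M.root ∉ H) : M.root ∉ cycleDarts C := by
  rintro ⟨i, h | h⟩
  · exact hH (by simpa [← h, M.α_root] using C.tails i)
  · exact hH (h ▸ C.tails i)

end Cycle

section PositiveCycle

variable {M : RMap n} {T : Set (Fin (2 * n + 1))} (hT : IsSpanningTree M T)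
  (C : DirCycle M (deltaH M T))
include hT

theorem exists_tour_eq_σ_tail_of_isMax {e : Fin (2 * n + 1)} (he : e ∈ cycleDarts C)
    (hmax : ∀ d ∈ cycleDarts C, idx M T d ≤ idx M T e) :
    ∃ i, tour M T e = M.σ (C.t i) := by
  obtain ⟨i, rfl | rfl⟩ := he
  · -- a tail last in the tour order is not a tree dart, since tree edges point away
    refine ⟨i, if_neg fun htT => ?_⟩
    rcases (C.tails i).2 with ⟨-, hlt⟩ | ⟨hαT, -⟩
    · rw [M.α_invol] at hlt
      exact (hmax _ (α_mem_cycleDarts C ⟨i, Or.inl rfl⟩)).not_gt hlt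
    · exact hαT (hT.2.1 _ htT)
  · -- a head last in the tour order is a tree dart, since non-tree heads come first
    have hαT : M.α (C.t i) ∈ T := by
      by_contra hαT
      rcases (C.tails i).2 with ⟨hαT', -⟩ | ⟨-, hlt⟩
      · exact hαT hαT'
      · rw [M.α_invol] at hlt
        exact (hmax _ ⟨i, Or.inl rfl⟩).not_gt hlt
    exact ⟨i, by rw [tour, if_pos hαT, M.α_invol]⟩

theorem root_mem_cycInterior : M.root ∈ cycInterior C := by
  obtain ⟨e, he, hmax⟩ := Set.exists_max_image (cycleDarts C) (idx M T) (Set.toFinite _)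
    ⟨C.t 0, 0, Or.inl rfl⟩
  have hoff : ∀ j, idx M T e < j → j ≤ 2 * n + 1 →
      (tour M T)^[j] M.root ∉ cycleDarts C := by
    intro j hj hjle hmem
    rcases hjle.lt_or_eq with hlt | rfl
    · exact (hmax _ hmem).not_gt (by rwa [idx_iterate_tour hT hlt])
    · rw [iterate_tour_period hT] at hmem
      exact root_notMem_cycleDarts C (deltaH_isOrientation hT).1 hmem
  have hte : tour M T e = (tour M T)^[idx M T e + 1] M.root := by
    rw [iterate_succ_apply', iterate_tour_idx hT]
  have hte_off : tour M T e ∉ cycleDarts C := hte ▸ hoff _ (lt_add_one _) (idx_lt hT e)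
  obtain ⟨i, hi⟩ := exists_tour_eq_σ_tail_of_isMax hT C he hmax
  refine ⟨tour M T e, ⟨i, 1, le_rfl, by rw [iterate_one, hi], fun m h1 h2 hm => ?_⟩,
    hte_off, ?_⟩
  · obtain rfl : m = 1 := by omega
    rw [iterate_one, ← hi] at hm
    exact hte_off (hm ▸ ⟨i - 1, Or.inr rfl⟩)
  · have hpath := reflTransGen_outsideStep_iterate_tour (fun _ => α_mem_cycleDarts C)
      (idx_lt hT e) hoff
    rwa [← hte, iterate_tour_period hT] at hpath

end PositiveCycle

/-- For any tree-rooted map `(M,T)`, the orientation `δ(M,T)` (tree edges away from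
the root, non-tree edges with head before tail around `T`) is a tree-orientation:
it has no positive cycle and every vertex is reachable from the root by a directed
path. -/
theorem delta_is_tree_orientation (M : RMap n) (T : Set (Fin (2 * n + 1)))
    (hT : IsSpanningTree M T) : IsTreeOrientation M (deltaH M T) :=
  ⟨deltaH_isOrientation hT, reflTransGen_dirStep_deltaH hT,
    fun C hC => hC (root_mem_cycInterior hT C)⟩
end
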